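/- Let α ∈ (1/2,1) and T > 0. There exists a constant C > 0 (depending only on α and T) such that for all 0 ≤ u < t ≤ T and all 0 < h ≤ 1, the quantity e₂^{(h)}(t,u) satisfies e₂^{(h)}(t,u) ≤ C·h·K(h−χ_h(u))·min((t−u)^(−α), h^(−α)). -/
import Mathlib

open MeasureTheory intervalIntegral Real

/-- Fractional kernel `K(u) = u^(α-1)/Γ(α)` for `u > 0`, `0` otherwise. -/
noncomputable def Kker (α u : ℝ) : ℝ := if 0 < u then u ^ (α - 1) / Real.Gamma α else 0

/-- First-order resolvent kernel `L(u) = u^(-α)/Γ(1-α)` for `u > 0`, `0` otherwise. -/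
noncomputable def Lker (α u : ℝ) : ℝ := if 0 < u then u ^ (-α) / Real.Gamma (1 - α) else 0

/-- Discretization map `φ_h(t) = h⌊t/h⌋`. -/
noncomputable def phi (h t : ℝ) : ℝ := h * (⌊t / h⌋ : ℝ)

/-- `χ_h(u) = u - φ_h(u)`. -/
noncomputable def chi (h u : ℝ) : ℝ := u - phi h u

/-- Discretized kernel `K^{(h)}`. -/
noncomputable def Kh (α h t s : ℝ) : ℝ :=
  if 0 ≤ s ∧ s < phi h t then Kker α (phi h t - s) else 0

/-- The kernel `g^{(h)}(t,s) = ∫_s^t L(t-v) K^{(h)}(v,s) dv`. -/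
noncomputable def gh (α h t s : ℝ) : ℝ := ∫ v in s..t, Lker α (t - v) * Kh α h v s

/-- `e₁^{(h)}(t,u)` from the proof of Proposition 3.3. -/
noncomputable def e1 (α h t u : ℝ) : ℝ :=
  (t - u) ^ (1 - α) *
    ∫ ξ in (0:ℝ)..(min ((h - chi h u) / (t - u)) 1),
      (1 - ξ) ^ (-α) * |Kh α h (ξ * (t - u) + u) u - Kker α (ξ * (t - u))|

/-- `e₂^{(h)}(t,u)` from the proof of Proposition 3.3. -/
noncomputable def e2 (α h t u : ℝ) : ℝ :=
  (t - u) ^ (1 - α) *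
    ∫ ξ in (min ((h - chi h u) / (t - u)) 1)..(min ((3 * h - chi h u) / (t - u)) 1),
      (1 - ξ) ^ (-α) * |Kh α h (ξ * (t - u) + u) u - Kker α (ξ * (t - u))|

/-- `e₃^{(h)}(t,u)` from the proof of Proposition 3.3. -/
noncomputable def e3 (α h t u : ℝ) : ℝ :=
  (t - u) ^ (1 - α) *
    ∫ ξ in (min ((3 * h - chi h u) / (t - u)) 1)..(1:ℝ),
      (1 - ξ) ^ (-α) * |Kh α h (ξ * (t - u) + u) u - Kker α (ξ * (t - u))|

lemma chi_nonneg' {h u : ℝ} (hh : 0 < h) : 0 ≤ chi h u := by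
  have := Int.floor_le (u / h)
  have : h * (⌊u / h⌋ : ℝ) ≤ h * (u / h) := mul_le_mul_of_nonneg_left this hh.le
  rw [mul_div_cancel₀ _ hh.ne'] at this
  simpa [chi, phi] using this

lemma chi_lt' {h u : ℝ} (hh : 0 < h) : chi h u < h := by
  have := Int.lt_floor_add_one (u / h)
  have h2 : h * (u / h) < h * ((⌊u / h⌋ : ℝ) + 1) := mul_lt_mul_of_pos_left this hh
  rw [mul_div_cancel₀ _ hh.ne'] at h2
  simp only [chi, phi]; nlinarith

lemma phi_ge' {h u v : ℝ} (hh : 0 < h) (hv : phi h u + h ≤ v) : phi h u + h ≤ phi h v := by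
  have h1 : ((⌊u / h⌋ : ℤ) + 1 : ℝ) ≤ v / h := by
    rw [le_div_iff₀ hh]
    have := Int.floor_le (u / h)
    simp only [phi] at hv
    nlinarith [hv]
  have h2 : (⌊u / h⌋ : ℤ) + 1 ≤ ⌊v / h⌋ := Int.le_floor.2 (by exact_mod_cast h1)
  have : ((⌊u / h⌋ : ℤ) + 1 : ℝ) ≤ (⌊v / h⌋ : ℝ) := by exact_mod_cast h2
  simp only [phi]; nlinarith

lemma Kker_nonneg' {α : ℝ} (u : ℝ) (hα : 0 < α) : 0 ≤ Kker α u := by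
  unfold Kker; split
  · exact div_nonneg (Real.rpow_nonneg (by linarith) _) (Real.Gamma_pos_of_pos hα).le
  · exact le_refl _

lemma Kker_anti' {α x y : ℝ} (hα : 0 < α) (hα1 : α < 1) (hx : 0 < x) (hxy : x ≤ y) :
    Kker α y ≤ Kker α x := by
  unfold Kker
  rw [if_pos hx, if_pos (lt_of_lt_of_le hx hxy)]
  have := Real.rpow_le_rpow_of_nonpos hx hxy (by linarith : α - 1 ≤ 0)
  have hg := Real.Gamma_pos_of_pos hα
  gcongr

/-- For `0 ≤ B ≤ A` and `0 < p ≤ 1`, `A^p - B^p ≤ A^(p-1) * (A - B)`. -/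
lemma rpow_sub_rpow_le' {A B p : ℝ} (hB : 0 ≤ B) (hBA : B ≤ A) (hp : 0 < p) (hp1 : p ≤ 1) :
    A ^ p - B ^ p ≤ A ^ (p - 1) * (A - B) := by
  rcases eq_or_lt_of_le (hB.trans hBA) with hA | hA
  · have hA0 : A = 0 := hA.symm
    have hB0 : B = 0 := le_antisymm (hA0 ▸ hBA) hB
    simp [hA0, hB0, Real.zero_rpow hp.ne']
  · have h1 : A ^ (p - 1) * B ≤ B ^ p := by
      rcases eq_or_lt_of_le hB with hB0 | hB0
      · simp [← hB0, Real.zero_rpow hp.ne']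
      · have : A ^ (p - 1) ≤ B ^ (p - 1) :=
          Real.rpow_le_rpow_of_nonpos hB0 hBA (by linarith)
        calc A ^ (p - 1) * B ≤ B ^ (p - 1) * B := by nlinarith
          _ = B ^ p := by rw [← Real.rpow_add_one hB0.ne' (p - 1)]; ring_nf
    have h2 : A ^ (p - 1) * A = A ^ p := by
      nth_rewrite 2 [← Real.rpow_one A]
      rw [← Real.rpow_add hA]; ring_nf
    nlinarith

lemma diff_rpow_min_bound {α s h A B : ℝ} (hα1 : 1/2 < α) (hα2 : α < 1)
    (hh : 0 < h) (hs0 : 0 < s) (hA0 : 0 ≤ A) (hB0 : 0 ≤ B) (hBA : B ≤ A)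
    (hABle : A - B ≤ 2 * h) (hAs : A ≤ s) (hAsh : s - h ≤ A) :
    A ^ (1 - α) - B ^ (1 - α) ≤ 4 * h * min (s ^ (-α)) (h ^ (-α)) := by
  have hp : 0 < 1 - α := by linarith
  have hhα : h ^ (1 - α) = h * h ^ (-α) := by
    rw [show (1 - α) = 1 + -α by ring, Real.rpow_add hh, Real.rpow_one]
  have hsα : s ^ (1 - α) = s * s ^ (-α) := by
    rw [show (1 - α) = 1 + -α by ring, Real.rpow_add hs0, Real.rpow_one]
  have hBp0 : 0 ≤ B ^ (1 - α) := Real.rpow_nonneg hB0 _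
  have hbound_h : A ^ (1 - α) - B ^ (1 - α) ≤ 4 * h * (h ^ (-α)) := by
    rcases le_or_gt A (2 * h) with hA2 | hA2
    · have h1 : A ^ (1 - α) ≤ (2 * h) ^ (1 - α) :=
        Real.rpow_le_rpow hA0 hA2 hp.le
      have h2 : (2 * h) ^ (1 - α) = 2 ^ (1 - α) * h ^ (1 - α) :=
        Real.mul_rpow (by norm_num) hh.le
      have h3 : 0 ≤ h ^ (1 - α) := Real.rpow_nonneg hh.le _
      have htwo : (2:ℝ) ^ (1 - α) ≤ 2 := by
        calc (2:ℝ) ^ (1 - α) ≤ (2:ℝ) ^ (1:ℝ) :=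
              Real.rpow_le_rpow_of_exponent_le one_le_two (by linarith)
          _ = 2 := Real.rpow_one 2
      have h4 : 2 ^ (1 - α) * h ^ (1 - α) ≤ 2 * h ^ (1 - α) := by nlinarith
      rw [hhα] at h4
      nlinarith
    · have hkey := rpow_sub_rpow_le' hB0 hBA hp (by linarith)
      have hAh : h ≤ A := by linarith
      have h5 : A ^ ((1 - α) - 1) = A ^ (-α) := by rw [show (1 - α) - 1 = -α by ring]
      have h6 : A ^ (-α) ≤ h ^ (-α) :=
        Real.rpow_le_rpow_of_nonpos hh hAh (by linarith)
      have h7 : 0 ≤ A ^ (-α) := Real.rpow_nonneg hA0 _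
      have h8 : 0 ≤ h ^ (-α) := Real.rpow_nonneg hh.le _
      rw [h5] at hkey
      nlinarith
  have hbound_s : A ^ (1 - α) - B ^ (1 - α) ≤ 4 * h * (s ^ (-α)) := by
    rcases le_or_gt s (2 * h) with hs2 | hs2
    · have h1 : A ^ (1 - α) ≤ s ^ (1 - α) :=
        Real.rpow_le_rpow hA0 hAs hp.le
      have h8 : 0 ≤ s ^ (-α) := Real.rpow_nonneg hs0.le _
      rw [hsα] at h1
      nlinarith
    · have hkey := rpow_sub_rpow_le' hB0 hBA hp (by linarith)
      have hs20 : (0:ℝ) < s / 2 := by linarith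
      have hAs2 : s / 2 ≤ A := by linarith
      have h5 : A ^ ((1 - α) - 1) = A ^ (-α) := by rw [show (1 - α) - 1 = -α by ring]
      have h6 : A ^ (-α) ≤ (s / 2) ^ (-α) :=
        Real.rpow_le_rpow_of_nonpos hs20 hAs2 (by linarith)
      have h9 : (s / 2) ^ (-α) = s ^ (-α) / 2 ^ (-α) :=
        Real.div_rpow hs0.le (by norm_num : (0:ℝ) ≤ 2) (-α)
      have h10 : (2:ℝ)⁻¹ ≤ 2 ^ (-α) := by
        calc (2:ℝ)⁻¹ = (2:ℝ) ^ (-1:ℝ) := by rw [Real.rpow_neg_one]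
          _ ≤ (2:ℝ) ^ (-α) :=
            Real.rpow_le_rpow_of_exponent_le one_le_two (by linarith)
      have h11 : 0 ≤ s ^ (-α) := Real.rpow_nonneg hs0.le _
      have h12 : s ^ (-α) / 2 ^ (-α) ≤ s ^ (-α) / 2⁻¹ :=
        div_le_div_of_nonneg_left h11 (by norm_num) h10
      have h13 : s ^ (-α) / (2:ℝ)⁻¹ = 2 * s ^ (-α) := by ring
      have h14 : A ^ (-α) ≤ 2 * s ^ (-α) := by rw [h9] at h6; linarith
      have h7 : 0 ≤ A ^ (-α) := Real.rpow_nonneg hA0 _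
      rw [h5] at hkey
      nlinarith
  rcases min_cases (s ^ (-α)) (h ^ (-α)) with ⟨hm, _⟩ | ⟨hm, _⟩ <;> rw [hm]
  · exact hbound_s
  · exact hbound_h

/-- bound on `e₂^{(h)}`. -/
theorem e2_bound (α T : ℝ) (hα : α ∈ Set.Ioo (1/2 : ℝ) 1) (hT : 0 < T) :
    ∃ C > 0, ∀ u t h : ℝ, 0 ≤ u → u < t → t ≤ T → 0 < h → h ≤ 1 →
      e2 α h t u ≤ C * h * Kker α (h - chi h u) * min ((t - u) ^ (-α)) (h ^ (-α)) := by
  obtain ⟨hα1, hα2⟩ := hα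
  have hα0 : 0 < α := by linarith
  have hp : 0 < 1 - α := by linarith
  refine ⟨4 / (1 - α), div_pos (by norm_num) hp, ?_⟩
  intro u t h hu hut htT hh hh1
  unfold e2
  set s := t - u with hs_def
  have hs0 : 0 < s := sub_pos.2 hut
  set χ := chi h u with hχ_def
  have hχ0 : 0 ≤ χ := chi_nonneg' hh
  have hχh : χ < h := chi_lt' hh
  set c := h - χ with hc_def
  have hc0 : 0 < c := by rw [hc_def]; linarith
  have hch : c ≤ h := by rw [hc_def]; linarith
  have hK0 : 0 ≤ Kker α c := Kker_nonneg' _ hα0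
  have hmin0 : 0 ≤ min (s ^ (-α)) (h ^ (-α)) :=
    le_min (Real.rpow_nonneg hs0.le _) (Real.rpow_nonneg hh.le _)
  have h3c : c ≤ 3 * h - χ := by rw [hc_def]; linarith
  by_cases hcs : s ≤ c
  · -- degenerate case : both endpoints equal 1
    have h1 : min (c / s) 1 = 1 :=
      min_eq_right ((one_le_div hs0).2 hcs)
    have h2 : min ((3 * h - χ) / s) 1 = 1 :=
      min_eq_right ((one_le_div hs0).2 (hcs.trans h3c))
    rw [h1, h2, intervalIntegral.integral_same, mul_zero]
    have : (0:ℝ) ≤ 4 / (1 - α) * h := by positivity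
    exact mul_nonneg (mul_nonneg this hK0) hmin0
  · push_neg at hcs
    have hcs1 : c / s ≤ 1 := (div_le_one hs0).2 hcs.le
    rw [min_eq_left hcs1]
    set bb := min ((3 * h - χ) / s) 1 with hbb_def
    have hbb1 : bb ≤ 1 := min_le_right _ _
    have hab : c / s ≤ bb :=
      le_min (by gcongr) hcs1
    -- pointwise bound of the integrand on `Ioc (c/s) bb`
    have hpt : ∀ ξ ∈ Set.Ioc (c / s) bb,
        (1 - ξ) ^ (-α) * |Kh α h (ξ * s + u) u - Kker α (ξ * s)| ≤
          Kker α c * (1 - ξ) ^ (-α) := by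
      intro ξ hξ
      have hξ1 : ξ ≤ 1 := hξ.2.trans hbb1
      have hξs : c < ξ * s := (div_lt_iff₀ hs0).1 hξ.1
      have hKx : Kker α (ξ * s) ≤ Kker α c := Kker_anti' hα0 hα2 hc0 hξs.le
      have hKx0 : 0 ≤ Kker α (ξ * s) := Kker_nonneg' _ hα0
      have hKh : Kh α h (ξ * s + u) u ≤ Kker α c := by
        unfold Kh; split
        · have hphi : phi h u + h ≤ phi h (ξ * s + u) := by
            apply phi_ge' hh
            have : phi h u = u - χ := by rw [hχ_def, chi]; ring
            rw [this]; nlinarith [hξs]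
          have hphi2 : c ≤ phi h (ξ * s + u) - u := by
            have : phi h u = u - χ := by rw [hχ_def, chi]; ring
            rw [this] at hphi; rw [hc_def]; linarith
          exact Kker_anti' hα0 hα2 hc0 hphi2
        · exact hK0
      have hKh0 : 0 ≤ Kh α h (ξ * s + u) u := by
        unfold Kh; split
        · exact Kker_nonneg' _ hα0
        · exact le_refl _
      have habs : |Kh α h (ξ * s + u) u - Kker α (ξ * s)| ≤ Kker α c :=
        abs_sub_le_iff.2 ⟨by linarith, by linarith⟩
      have h1ξ : 0 ≤ (1 - ξ) ^ (-α) := Real.rpow_nonneg (by linarith) _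
      calc (1 - ξ) ^ (-α) * |Kh α h (ξ * s + u) u - Kker α (ξ * s)|
          ≤ (1 - ξ) ^ (-α) * Kker α c := mul_le_mul_of_nonneg_left habs h1ξ
        _ = Kker α c * (1 - ξ) ^ (-α) := mul_comm _ _
    -- integrability of the majorant
    have hbase : IntervalIntegrable (fun x : ℝ => (1 - x) ^ (-α)) volume (c / s) bb := by
      have := (intervalIntegral.intervalIntegrable_rpow'
        (by linarith : (-1:ℝ) < -α) (a := 1 - c / s) (b := 1 - bb)).comp_sub_left 1
      simpa using this
    have hInt : IntervalIntegrable (fun x : ℝ => Kker α c * (1 - x) ^ (-α))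
        volume (c / s) bb := hbase.const_mul _
    -- integral comparison
    have hmono : (∫ ξ in (c / s)..bb,
          (1 - ξ) ^ (-α) * |Kh α h (ξ * s + u) u - Kker α (ξ * s)|)
        ≤ ∫ ξ in (c / s)..bb, Kker α c * (1 - ξ) ^ (-α) := by
      rw [intervalIntegral.integral_of_le hab, intervalIntegral.integral_of_le hab]
      apply MeasureTheory.integral_mono_of_nonneg
      · refine (ae_restrict_iff' measurableSet_Ioc).2 (Filter.Eventually.of_forall ?_)
        intro ξ hξ
        have hξ1 : ξ ≤ 1 := hξ.2.trans hbb1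
        exact mul_nonneg (Real.rpow_nonneg (by linarith) _) (abs_nonneg _)
      · exact hInt.1
      · refine (ae_restrict_iff' measurableSet_Ioc).2 (Filter.Eventually.of_forall ?_)
        intro ξ hξ
        exact hpt ξ hξ
    -- value of the majorant integral
    have hval : (∫ ξ in (c / s)..bb, Kker α c * (1 - ξ) ^ (-α))
        = Kker α c * (((1 - c / s) ^ (1 - α) - (1 - bb) ^ (1 - α)) / (1 - α)) := by
      rw [intervalIntegral.integral_const_mul]
      congr 1
      have hcomp : (∫ ξ in (c / s)..bb, (1 - ξ) ^ (-α))
          = ∫ x in (1 - bb)..(1 - c / s), x ^ (-α) :=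
        intervalIntegral.integral_comp_sub_left (fun x => x ^ (-α)) 1
      rw [hcomp, integral_rpow (Or.inl (by linarith : (-1:ℝ) < -α))]
      rw [show -α + 1 = 1 - α by ring]
    -- arithmetic part
    set A := s - c with hA_def
    set B := max (s - (3 * h - χ)) 0 with hB_def
    clear_value s χ c bb A B
    have hA0 : 0 ≤ A := by rw [hA_def]; linarith
    have hB0 : 0 ≤ B := by rw [hB_def]; exact le_max_right _ _
    have hBA : B ≤ A := by
      rw [hB_def]; exact max_le (by rw [hA_def]; linarith) hA0
    have hABle : A - B ≤ 2 * h := by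
      have h1 : s - (3 * h - χ) ≤ B := by rw [hB_def]; exact le_max_left _ _
      rw [hA_def, hc_def]; linarith
    have h1a0 : 0 ≤ 1 - c / s := by linarith
    have h1b0 : 0 ≤ 1 - bb := by linarith
    have hsA : s * (1 - c / s) = A := by
      rw [hA_def]; field_simp
    have hsB : s * (1 - bb) = B := by
      rw [hbb_def, hB_def]
      by_cases hb1 : (3 * h - χ) / s ≤ 1
      · have hb1' : 3 * h - χ ≤ s := (div_le_one hs0).1 hb1
        rw [min_eq_left hb1, max_eq_left (by linarith)]
        field_simp
      · push_neg at hb1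
        have hb1' : s < 3 * h - χ := (one_lt_div hs0).1 hb1
        rw [min_eq_right hb1.le, max_eq_right (by linarith)]
        ring
    have hA_eq : s ^ (1 - α) * (1 - c / s) ^ (1 - α) = A ^ (1 - α) := by
      rw [← Real.mul_rpow hs0.le h1a0, hsA]
    have hB_eq : s ^ (1 - α) * (1 - bb) ^ (1 - α) = B ^ (1 - α) := by
      rw [← Real.mul_rpow hs0.le h1b0, hsB]
    have hfin : A ^ (1 - α) - B ^ (1 - α) ≤ 4 * h * min (s ^ (-α)) (h ^ (-α)) :=
      diff_rpow_min_bound hα1 hα2 hh hs0 hA0 hB0 hBA hABle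
        (by rw [hA_def]; linarith) (by rw [hA_def, hc_def]; linarith)
    -- put it all together
    calc s ^ (1 - α) * ∫ ξ in (c / s)..bb,
          (1 - ξ) ^ (-α) * |Kh α h (ξ * s + u) u - Kker α (ξ * s)|
        ≤ s ^ (1 - α) *
            (Kker α c * (((1 - c / s) ^ (1 - α) - (1 - bb) ^ (1 - α)) / (1 - α))) := by
          rw [← hval]
          exact mul_le_mul_of_nonneg_left hmono (Real.rpow_nonneg hs0.le _)
      _ = Kker α c * ((s ^ (1 - α) * (1 - c / s) ^ (1 - α)
            - s ^ (1 - α) * (1 - bb) ^ (1 - α)) / (1 - α)) := by ring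
      _ = Kker α c * ((A ^ (1 - α) - B ^ (1 - α)) / (1 - α)) := by
          rw [hA_eq, hB_eq]
      _ ≤ Kker α c * ((4 * h * min (s ^ (-α)) (h ^ (-α))) / (1 - α)) := by
          apply mul_le_mul_of_nonneg_left _ hK0
          gcongr
      _ = 4 / (1 - α) * h * Kker α c * min (s ^ (-α)) (h ^ (-α)) := by ring
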